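/- (Appendix B) Let γ ∈ [0,1] and let Υ be the dephasing channel with Kraus operators K₁ = (1 − γ) I⊗I, K₂ = √(γ(1 − γ)) I⊗σ_z, K₃ = √(γ(1 − γ)) σ_z⊗I, K₄ = γ σ_z⊗σ_z. Then for every real time t, the noisy state ρ̃(t) = Σ_{i=1}^{4} K_i |ψ(t)⟩⟨ψ(t)| K_i† is the 4×4 matrix whose only nonzero entries are ρ̃₂₂ = |α(t)|², ρ̃₃₃ = |β(t)|², ρ̃₂₃ = (1 − 2γ)² α(t)β(t)*, ρ̃₃₂ = (1 − 2γ)² α(t)*β(t); in particular the battery reduced state is unchanged, and for γ ≠ 1/2 the battery capacity and the noisy entanglement Ẽ(t) := 2(1 − 2γ)²|α(t)||β(t)| satisfy C_b(t) = 2 ω_b √(1 − Ẽ(t)²/(1 − 2γ)⁴). -/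

import Mathlib

open Complex Matrix Kronecker ComplexConjugate

/-!
All four Kraus operators are diagonal in the computational basis: they are the tensor square of
the single-qubit dephasing channel `{√(1-γ) I, √γ σ_z}`. Conjugating by diagonal matrices scales
the entry `ρ x y` by `∑ᵢ gᵢ(x) gᵢ(y)*`, which factorises over the two qubits into factors `1`
(equal indices) or `1 - 2γ` (different indices). The state `α|01⟩ + β|10⟩` has its only
coherences between `|01⟩` and `|10⟩`, which differ on both qubits, so they are scaled by
`(1 - 2γ)²` and the populations are untouched.

Since `ξ₁ ξ₂ = -1`, the amplitudes satisfy `|α|² + |β|² = 1` for any phases, whence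
`|1 - 2|α|²| = √(1 - 4|α|²|β|²)`; the factor `(1 - 2γ)⁴` in `Ẽ²` cancels when `γ ≠ 1/2`.
-/

namespace TwoQubitBattery

lemma add_div_mul_sub_div_eq_neg_one {J Δ Ω : ℝ} (hJ : J ≠ 0) (hΩ : Ω ^ 2 = J ^ 2 + Δ ^ 2) :
    (Δ + Ω) / J * ((Δ - Ω) / J) = -1 := by
  field_simp
  linear_combination -hΩ

/-- The cross terms `-2ab Re(u v̄)` and `-2 Re(u v̄)` cancel because `ab = -1`. -/
lemma norm_sq_add_norm_sq_of_mul_eq_neg_one {u v : ℂ} (hu : ‖u‖ = 1) (hv : ‖v‖ = 1)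
    {a b : ℝ} (hab : a * b = -1) :
    ‖u * a - v * b‖ ^ 2 + ‖u - v‖ ^ 2 = (a - b) ^ 2 := by
  have hu' : normSq u = 1 := by rw [← Complex.sq_norm, hu, one_pow]
  have hv' : normSq v = 1 := by rw [← Complex.sq_norm, hv, one_pow]
  have hcross : (u * a * conj (v * b)).re = a * b * (u * conj v).re := by
    rw [map_mul, conj_ofReal, show u * a * (conj v * b) = (a * b : ℝ) * (u * conj v) by
      push_cast; ring, re_ofReal_mul]
  simp only [Complex.sq_norm, normSq_sub, normSq_mul, normSq_ofReal, hu', hv', hcross]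
  linear_combination (2 - 2 * (u * conj v).re) * hab

lemma norm_div_sq_add_norm_div_sq_eq_one {u v : ℂ} (hu : ‖u‖ = 1) (hv : ‖v‖ = 1)
    {a b : ℝ} (hab : a * b = -1) (hne : a ≠ b) :
    ‖(u * a - v * b) / (a - b)‖ ^ 2 + ‖(u - v) / (a - b)‖ ^ 2 = 1 := by
  have h : ((a : ℂ) - b) = ((a - b : ℝ) : ℂ) := by push_cast; ring
  rw [h, norm_div, norm_div, div_pow, div_pow, ← add_div,
    norm_sq_add_norm_sq_of_mul_eq_neg_one hu hv hab, norm_real, Real.norm_eq_abs, sq_abs,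
    div_self (pow_ne_zero 2 (sub_ne_zero.2 hne))]

lemma norm_exp_neg_I_mul_ofReal (x : ℝ) : ‖exp (-I * x)‖ = 1 := by
  rw [show -I * x = ((-x : ℝ) : ℂ) * I by push_cast; ring, norm_exp_ofReal_mul_I]

lemma abs_one_sub_two_mul_sq_eq_sqrt {a b : ℝ} (hab : a ^ 2 + b ^ 2 = 1) :
    |1 - 2 * a ^ 2| = Real.sqrt (1 - (2 * a * b) ^ 2) := by
  rw [← Real.sqrt_sq_eq_abs]
  congr 1
  linear_combination 4 * a ^ 2 * hab

lemma sum_diagonal_mul_mul_conjTranspose_apply {ι n R : Type*} [Fintype ι] [Fintype n]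
    [DecidableEq n] [CommSemiring R] [StarRing R] (g : ι → n → R) (ρ : Matrix n n R) (x y : n) :
    (∑ i, diagonal (g i) * ρ * (diagonal (g i))ᴴ) x y = (∑ i, g i x * star (g i y)) * ρ x y := by
  simp only [Matrix.sum_apply, diagonal_conjTranspose, mul_diagonal, diagonal_mul, Finset.sum_mul,
    Pi.star_apply]
  exact Finset.sum_congr rfl fun i _ => by ring

lemma smul_diagonal_kronecker_diagonal {m n R : Type*} [DecidableEq m] [DecidableEq n]
    [CommSemiring R] (r : R) (a : m → R) (b : n → R) :
    r • (diagonal a ⊗ₖ diagonal b) = diagonal fun x => r * (a x.1 * b x.2) := by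
  rw [diagonal_kronecker_diagonal, ← diagonal_smul]
  rfl

noncomputable def dephasingKraus (γ : ℝ) : Fin 4 → Matrix (Fin 2 × Fin 2) (Fin 2 × Fin 2) ℂ :=
  ![((1 - γ : ℝ) : ℂ) • ((1 : Matrix (Fin 2) (Fin 2) ℂ) ⊗ₖ (1 : Matrix (Fin 2) (Fin 2) ℂ)),
    ((Real.sqrt (γ * (1 - γ)) : ℝ) : ℂ) • ((1 : Matrix (Fin 2) (Fin 2) ℂ) ⊗ₖ !![1, 0; 0, -1]),
    ((Real.sqrt (γ * (1 - γ)) : ℝ) : ℂ) • (!![1, 0; 0, -1] ⊗ₖ (1 : Matrix (Fin 2) (Fin 2) ℂ)),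
    ((γ : ℝ) : ℂ) • (!![1, 0; 0, -1] ⊗ₖ !![1, 0; 0, -1])]

/-- Multiplier of a single-qubit coherence under dephasing of strength `γ`. -/
def dephasingFactor (γ : ℝ) (a c : Fin 2) : ℂ := if a = c then 1 else ((1 - 2 * γ : ℝ) : ℂ)

lemma pauliZ_eq_diagonal : !![(1 : ℂ), 0; 0, -1] = diagonal ![1, -1] := by
  ext i j; fin_cases i <;> fin_cases j <;> rfl

lemma dephasingKraus_eq_diagonal (γ : ℝ) (i : Fin 4) :
    dephasingKraus γ i = diagonal fun x =>
      ![((1 - γ : ℝ) : ℂ), (Real.sqrt (γ * (1 - γ)) : ℂ) * ![1, -1] x.2,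
        (Real.sqrt (γ * (1 - γ)) : ℂ) * ![1, -1] x.1,
        (γ : ℂ) * (![1, -1] x.1 * ![1, -1] x.2)] i := by
  have hone : (1 : Matrix (Fin 2) (Fin 2) ℂ) = diagonal fun _ => 1 := diagonal_one.symm
  rw [dephasingKraus, pauliZ_eq_diagonal, hone]
  simp only [smul_diagonal_kronecker_diagonal]
  fin_cases i <;> simp

theorem dephasing_apply {γ : ℝ} (hγ : 0 ≤ γ * (1 - γ))
    (ρ : Matrix (Fin 2 × Fin 2) (Fin 2 × Fin 2) ℂ) (x y : Fin 2 × Fin 2) :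
    (∑ i, dephasingKraus γ i * ρ * (dephasingKraus γ i)ᴴ) x y =
      dephasingFactor γ x.1 y.1 * dephasingFactor γ x.2 y.2 * ρ x y := by
  have hs : (Real.sqrt (γ * (1 - γ)) : ℂ) * (Real.sqrt (γ * (1 - γ)) : ℂ) = γ * (1 - γ) := by
    rw [← ofReal_mul, Real.mul_self_sqrt hγ]; push_cast; ring
  simp only [dephasingKraus_eq_diagonal, sum_diagonal_mul_mul_conjTranspose_apply]
  congr 1
  obtain ⟨a, b⟩ := x; obtain ⟨c, d⟩ := y
  fin_cases a <;> fin_cases b <;> fin_cases c <;> fin_cases d <;>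
    simp [Fin.sum_univ_four, dephasingFactor, hs] <;> ring

def singleExcitation (α β : ℂ) : Fin 2 × Fin 2 → ℂ :=
  fun x => if x = (0, 1) then α else if x = (1, 0) then β else 0

lemma dephasingFactor_mul_singleExcitation (γ : ℝ) (α β : ℂ) (x y : Fin 2 × Fin 2) :
    dephasingFactor γ x.1 y.1 * dephasingFactor γ x.2 y.2 *
        (singleExcitation α β x * star (singleExcitation α β y)) =
      (if x = y then 1 else ((1 - 2 * γ : ℝ) : ℂ) ^ 2) *
        (singleExcitation α β x * star (singleExcitation α β y)) := by
  obtain ⟨a, b⟩ := x; obtain ⟨c, d⟩ := y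
  fin_cases a <;> fin_cases b <;> fin_cases c <;> fin_cases d <;>
    simp [dephasingFactor, singleExcitation, sq]

lemma partialTrace_singleExcitation (c : ℂ) (α β : ℂ) :
    (of fun a a' : Fin 2 => ∑ b : Fin 2,
      (if ((a, b) : Fin 2 × Fin 2) = (a', b) then 1 else c) *
        (singleExcitation α β (a, b) * star (singleExcitation α β (a', b)))) =
      !![((‖α‖ ^ 2 : ℝ) : ℂ), 0; 0, ((‖β‖ ^ 2 : ℝ) : ℂ)] := by
  ext a a'
  fin_cases a <;> fin_cases a' <;> simp [singleExcitation, mul_conj']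

end TwoQubitBattery

open TwoQubitBattery in
theorem stmt_19_general (ωb J1 t : ℝ)
    (hJ1 : J1 ≠ 0)
    (Δ Ω e1 e2 ξ1 ξ2 p : ℝ) (α β : ℂ)
    (hΩ : Ω = Real.sqrt (J1 ^ 2 + Δ ^ 2))
    (hξ1 : ξ1 = (Δ + Ω) / J1) (hξ2 : ξ2 = (Δ - Ω) / J1)
    (hα : α = (Complex.exp (-Complex.I * ((e1 * t : ℝ) : ℂ)) * (ξ1 : ℂ) -
        Complex.exp (-Complex.I * ((e2 * t : ℝ) : ℂ)) * (ξ2 : ℂ)) / ((ξ1 : ℂ) - (ξ2 : ℂ)))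
    (hβ : β = (Complex.exp (-Complex.I * ((e1 * t : ℝ) : ℂ)) -
        Complex.exp (-Complex.I * ((e2 * t : ℝ) : ℂ))) / ((ξ1 : ℂ) - (ξ2 : ℂ)))
    (hp : p = ‖α‖ ^ 2)
    (Cb : ℝ) (hCb : Cb = 2 * ωb * |1 - 2 * p|)
    (γ : ℝ) (hγ : 0 ≤ γ ∧ γ ≤ 1)
    (ψ : Fin 2 × Fin 2 → ℂ)
    (hψ : ψ = fun x => if x = (0, 1) then α else if x = (1, 0) then β else 0)
    (σz : Matrix (Fin 2) (Fin 2) ℂ) (hσz : σz = !![1, 0; 0, -1])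
    (K : Fin 4 → Matrix (Fin 2 × Fin 2) (Fin 2 × Fin 2) ℂ)
    (hK : K = ![((1 - γ : ℝ) : ℂ) • ((1 : Matrix (Fin 2) (Fin 2) ℂ) ⊗ₖ (1 : Matrix (Fin 2) (Fin 2) ℂ)),
                ((Real.sqrt (γ * (1 - γ)) : ℝ) : ℂ) • ((1 : Matrix (Fin 2) (Fin 2) ℂ) ⊗ₖ σz),
                ((Real.sqrt (γ * (1 - γ)) : ℝ) : ℂ) • (σz ⊗ₖ (1 : Matrix (Fin 2) (Fin 2) ℂ)),
                ((γ : ℝ) : ℂ) • (σz ⊗ₖ σz)])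
    (ρnoisy : Matrix (Fin 2 × Fin 2) (Fin 2 × Fin 2) ℂ)
    (hρnoisy : ρnoisy = ∑ i : Fin 4, K i * (Matrix.of fun i j => ψ i * star (ψ j)) * (K i)ᴴ)
    (Et : ℝ) (hEt : Et = 2 * (1 - 2 * γ) ^ 2 * ‖α‖ * ‖β‖) :
    ρnoisy = Matrix.of (fun i j =>
        (if i = j then 1 else ((1 - 2 * γ : ℝ) : ℂ) ^ 2) * (ψ i * star (ψ j))) ∧
    (Matrix.of fun a a' : Fin 2 => ∑ b : Fin 2, ρnoisy (a, b) (a', b)) =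
        !![(p : ℂ), 0; 0, 1 - (p : ℂ)] ∧
    (γ ≠ 1 / 2 → Cb = 2 * ωb * Real.sqrt (1 - Et ^ 2 / (1 - 2 * γ) ^ 4)) := by
  have hΩsq : Ω ^ 2 = J1 ^ 2 + Δ ^ 2 := by rw [hΩ, Real.sq_sqrt (by positivity)]
  have hΩpos : 0 < Ω := hΩ ▸ Real.sqrt_pos.2 (by positivity)
  have hξ : ξ1 * ξ2 = -1 := hξ1 ▸ hξ2 ▸ add_div_mul_sub_div_eq_neg_one hJ1 hΩsq
  have hξne : ξ1 ≠ ξ2 := by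
    rw [hξ1, hξ2, Ne, div_left_inj' hJ1]
    linarith
  have hnorm : ‖α‖ ^ 2 + ‖β‖ ^ 2 = 1 :=
    hα ▸ hβ ▸ norm_div_sq_add_norm_div_sq_eq_one (norm_exp_neg_I_mul_ofReal _)
      (norm_exp_neg_I_mul_ofReal _) hξ hξne
  have hKraus : K = dephasingKraus γ := by rw [hK, hσz]; rfl
  replace hψ : ψ = singleExcitation α β := hψ
  have hρ : ρnoisy = of fun i j =>
      (if i = j then 1 else ((1 - 2 * γ : ℝ) : ℂ) ^ 2) * (ψ i * star (ψ j)) := by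
    ext x y
    rw [hρnoisy, hKraus, dephasing_apply (by nlinarith), of_apply, hψ]
    exact dephasingFactor_mul_singleExcitation γ α β x y
  refine ⟨hρ, ?_, fun hγ2 => ?_⟩
  · simp only [hρ, of_apply, hψ]
    rw [partialTrace_singleExcitation, hp, eq_sub_of_add_eq' hnorm, ofReal_sub, ofReal_one]
  · have hc : 1 - 2 * γ ≠ 0 := by contrapose! hγ2; linarith
    rw [hCb, hp, abs_one_sub_two_mul_sq_eq_sqrt hnorm, hEt]
    congr 3
    field_simp

/-- Appendix B: dephasing noise leaves the populations unchanged, multiplies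
the coherences by `(1−2γ)²`, and for `γ ≠ 1/2` the battery capacity satisfies
`C_b = 2ω_b √(1 − Ẽ²/(1−2γ)⁴)` with `Ẽ = 2(1−2γ)²|α||β|`. -/
theorem stmt_19 (ωb ωc J1 J2 t : ℝ) (hωb : 0 < ωb) (hωc : 0 < ωc) (hJ1 : J1 ≠ 0)
    (Δ Ω e1 e2 ξ1 ξ2 p : ℝ) (α β : ℂ)
    (hΔ : Δ = ωb - ωc) (hΩ : Ω = Real.sqrt (J1 ^ 2 + Δ ^ 2))
    (he1 : e1 = Ω - J2) (he2 : e2 = -Ω - J2)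
    (hξ1 : ξ1 = (Δ + Ω) / J1) (hξ2 : ξ2 = (Δ - Ω) / J1)
    (hα : α = (Complex.exp (-Complex.I * ((e1 * t : ℝ) : ℂ)) * (ξ1 : ℂ) -
        Complex.exp (-Complex.I * ((e2 * t : ℝ) : ℂ)) * (ξ2 : ℂ)) / ((ξ1 : ℂ) - (ξ2 : ℂ)))
    (hβ : β = (Complex.exp (-Complex.I * ((e1 * t : ℝ) : ℂ)) -
        Complex.exp (-Complex.I * ((e2 * t : ℝ) : ℂ))) / ((ξ1 : ℂ) - (ξ2 : ℂ)))
    (hp : p = ‖α‖ ^ 2)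
    (Cb : ℝ) (hCb : Cb = 2 * ωb * |1 - 2 * p|)
    (γ : ℝ) (hγ : 0 ≤ γ ∧ γ ≤ 1)
    (ψ : Fin 2 × Fin 2 → ℂ)
    (hψ : ψ = fun x => if x = (0, 1) then α else if x = (1, 0) then β else 0)
    (σz : Matrix (Fin 2) (Fin 2) ℂ) (hσz : σz = !![1, 0; 0, -1])
    (K : Fin 4 → Matrix (Fin 2 × Fin 2) (Fin 2 × Fin 2) ℂ)
    (hK : K = ![((1 - γ : ℝ) : ℂ) • ((1 : Matrix (Fin 2) (Fin 2) ℂ) ⊗ₖ (1 : Matrix (Fin 2) (Fin 2) ℂ)),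
                ((Real.sqrt (γ * (1 - γ)) : ℝ) : ℂ) • ((1 : Matrix (Fin 2) (Fin 2) ℂ) ⊗ₖ σz),
                ((Real.sqrt (γ * (1 - γ)) : ℝ) : ℂ) • (σz ⊗ₖ (1 : Matrix (Fin 2) (Fin 2) ℂ)),
                ((γ : ℝ) : ℂ) • (σz ⊗ₖ σz)])
    (ρnoisy : Matrix (Fin 2 × Fin 2) (Fin 2 × Fin 2) ℂ)
    (hρnoisy : ρnoisy = ∑ i : Fin 4, K i * (Matrix.of fun i j => ψ i * star (ψ j)) * (K i)ᴴ)
    (Et : ℝ) (hEt : Et = 2 * (1 - 2 * γ) ^ 2 * ‖α‖ * ‖β‖) :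
    ρnoisy = Matrix.of (fun i j =>
        (if i = j then 1 else ((1 - 2 * γ : ℝ) : ℂ) ^ 2) * (ψ i * star (ψ j))) ∧
    (Matrix.of fun a a' : Fin 2 => ∑ b : Fin 2, ρnoisy (a, b) (a', b)) =
        !![(p : ℂ), 0; 0, 1 - (p : ℂ)] ∧
    (γ ≠ 1 / 2 → Cb = 2 * ωb * Real.sqrt (1 - Et ^ 2 / (1 - 2 * γ) ^ 4)) :=
  stmt_19_general ωb J1 t hJ1 Δ Ω e1 e2 ξ1 ξ2 p α β hΩ hξ1 hξ2 hα hβ hp Cb hCb γ hγ ψ hψ σz hσz K hK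
    ρnoisy hρnoisy Et hEt
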